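/- arXiv:1310.2629 — 4 statements merged into one kernel-verified Lean document; each statement's English description precedes it below -/
import Mathlib

section
/- Let g : ℝ → ℝ be continuous with lim_{|x|→∞} g(x)² = σ² > 0 and K₁² ≤ g(x)² ≤ K₂² for all x, where K₁ > 0. Let Z : [0,∞) → [0,∞) be measurable, and suppose that for every c > 0, (1/t)·∫₀ᵗ 1_{Z(s) ≤ c} ds → 0 as t → ∞. Then (1/t)·∫₀ᵗ g(√(Z(s)))² ds → σ² as t → ∞. -/
/-!
A continuous `g²` with a limit at infinity is bounded, say `|g² - σ²| ≤ K`. Given `ε > 0`, choose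
`c` such that `g(√x)²` is `ε/2`-close to `σ²` for `x ≥ c`; then
`|g(√Z)² - σ²| ≤ K · 1_{Z ≤ c} + ε/2` pointwise, so the time average of `g(√Z)²` deviates from
`σ²` by at most `K` times the fraction of time spent in `{Z ≤ c}`, plus `ε/2`, and that fraction
tends to `0`.
-/

open Filter MeasureTheory Set Topology

noncomputable section

def timeAverage (f : ℝ → ℝ) (t : ℝ) : ℝ := (∫ s in Ioc (0 : ℝ) t, f s) / t

theorem timeAverage_const {t : ℝ} (ht : 0 < t) (c : ℝ) : timeAverage (fun _ => c) t = c := by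
  rw [timeAverage, setIntegral_const, measureReal_def, Real.volume_Ioc,
    ENNReal.toReal_ofReal (by linarith), sub_zero, smul_eq_mul, mul_div_cancel_left₀ _ ht.ne']

theorem timeAverage_const_mul (c : ℝ) (f : ℝ → ℝ) (t : ℝ) :
    timeAverage (fun s => c * f s) t = c * timeAverage f t := by
  rw [timeAverage, timeAverage, integral_const_mul, mul_div_assoc]

theorem timeAverage_add_const {f : ℝ → ℝ} {t : ℝ} (ht : 0 < t) (hf : IntegrableOn f (Ioc 0 t))
    (c : ℝ) : timeAverage (fun s => f s + c) t = timeAverage f t + c := by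
  rw [timeAverage, integral_add hf (integrableOn_const measure_Ioc_lt_top.ne), add_div,
    ← timeAverage, ← timeAverage, timeAverage_const ht]

theorem abs_timeAverage_sub_le {f k : ℝ → ℝ} {t L : ℝ} (ht : 0 < t)
    (hf : IntegrableOn f (Ioc 0 t)) (hk : IntegrableOn k (Ioc 0 t)) (hfk : ∀ s, |f s - L| ≤ k s) :
    |timeAverage f t - L| ≤ timeAverage k t := by
  have hsub : timeAverage f t - L = timeAverage (fun s => f s - L) t := by
    simp_rw [sub_eq_add_neg, timeAverage_add_const ht hf]
  rw [hsub, timeAverage, timeAverage, abs_div, abs_of_pos ht]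
  gcongr
  rw [← Real.norm_eq_abs]
  exact norm_integral_le_of_norm_le hk (ae_of_all _ fun s => (Real.norm_eq_abs _).trans_le (hfk s))

theorem integrableOn_Ioc_of_abs_le {f : ℝ → ℝ} {C : ℝ} (hf : Measurable f) (hfC : ∀ x, |f x| ≤ C)
    (t : ℝ) : IntegrableOn f (Ioc 0 t) :=
  Measure.integrableOn_of_bounded measure_Ioc_lt_top.ne hf.aestronglyMeasurable (ae_of_all _ hfC)

theorem tendsto_timeAverage_comp_of_tendsto_atTop {φ Z : ℝ → ℝ} {L C : ℝ}
    (hφm : Measurable φ) (hφC : ∀ x, |φ x| ≤ C) (hφ : Tendsto φ atTop (𝓝 L)) (hZm : Measurable Z)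
    (hZ : ∀ c : ℝ, 0 < c →
      Tendsto (timeAverage fun s => if Z s ≤ c then (1 : ℝ) else 0) atTop (𝓝 0)) :
    Tendsto (timeAverage (φ ∘ Z)) atTop (𝓝 L) := by
  rw [Metric.tendsto_nhds]
  intro ε hε
  obtain ⟨M, hM⟩ := eventually_atTop.1 (Metric.tendsto_nhds.1 hφ (ε / 2) (half_pos hε))
  set c := max M 1
  set ind : ℝ → ℝ := fun s => if Z s ≤ c then 1 else 0
  have hind : ∀ s, |ind s| ≤ 1 := fun s => by by_cases hs : Z s ≤ c <;> simp [ind, hs]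
  have hindm : Measurable ind :=
    Measurable.ite (measurableSet_le hZm measurable_const) measurable_const measurable_const
  have hpt : ∀ s, |φ (Z s) - L| ≤ (C + |L|) * ind s + ε / 2 := fun s => by
    by_cases hs : Z s ≤ c
    · have : |φ (Z s) - L| ≤ C + |L| := (abs_sub _ _).trans (add_le_add_left (hφC _) _)
      simp only [ind, hs, if_true, mul_one]
      linarith
    · simp only [ind, hs, if_false, mul_zero, zero_add]
      exact (hM _ ((le_max_left M 1).trans (not_le.1 hs).le)).le
  have hbound : Tendsto (fun t => (C + |L|) * timeAverage ind t + ε / 2) atTop (𝓝 (ε / 2)) := by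
    simpa using ((hZ c (lt_max_of_lt_right one_pos)).const_mul (C + |L|)).add_const (ε / 2)
  filter_upwards [hbound.eventually (eventually_lt_nhds (half_lt_self hε)),
    eventually_gt_atTop 0] with t hlt ht
  have hindI := integrableOn_Ioc_of_abs_le hindm hind t
  calc dist (timeAverage (φ ∘ Z) t) L
      ≤ timeAverage (fun s => (C + |L|) * ind s + ε / 2) t :=
        abs_timeAverage_sub_le ht (integrableOn_Ioc_of_abs_le (hφm.comp hZm) (fun s => hφC _) t)
          ((hindI.const_mul _).add (integrableOn_const measure_Ioc_lt_top.ne)) hpt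
    _ = (C + |L|) * timeAverage ind t + ε / 2 := by
        rw [timeAverage_add_const ht (hindI.const_mul _), timeAverage_const_mul]
    _ < ε := hlt

theorem Continuous.exists_abs_le_of_tendsto_cocompact {X : Type*} [TopologicalSpace X]
    {f : X → ℝ} {y : ℝ} (hf : Continuous f) (hlim : Tendsto f (cocompact X) (𝓝 y)) :
    ∃ C, ∀ x, |f x| ≤ C := by
  obtain ⟨C, hC⟩ := isBounded_iff_forall_norm_le.1
    ((hlim.isCompact_insert_range_of_cocompact hf).isBounded.subset (subset_insert _ _))
  exact ⟨C, fun x => hC _ (mem_range_self x)⟩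

end

theorem time_average_g_sq_general (g : ℝ → ℝ) (σ : ℝ) (Z : ℝ → ℝ)
    (hgc : Continuous g)
    (hlim : Tendsto (fun x => (g x) ^ 2) (Filter.cocompact ℝ) (nhds (σ ^ 2)))
    (hZmeas : Measurable Z)
    (h : ∀ c : ℝ, 0 < c → Tendsto (fun t : ℝ =>
        (∫ s in Ioc (0:ℝ) t, if Z s ≤ c then (1:ℝ) else 0) / t) atTop (nhds 0)) :
    Tendsto (fun t : ℝ =>
        (∫ s in Ioc (0:ℝ) t, (g (Real.sqrt (Z s))) ^ 2) / t) atTop (nhds (σ ^ 2)) := by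
  obtain ⟨C, hC⟩ := (hgc.pow 2).exists_abs_le_of_tendsto_cocompact hlim
  have hφ : Tendsto (fun x => g (Real.sqrt x) ^ 2) atTop (𝓝 (σ ^ 2)) :=
    (hlim.mono_left atTop_le_cocompact).comp Real.tendsto_sqrt_atTop
  exact tendsto_timeAverage_comp_of_tendsto_atTop (φ := fun x => g (Real.sqrt x) ^ 2)
    ((hgc.measurable.comp Real.continuous_sqrt.measurable).pow_const 2) (fun x => hC _) hφ
    hZmeas h

/-- If `g² → σ² > 0` at infinity, `0 < K₁² ≤ g² ≤ K₂²`, and for every `c > 0` the time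
average of `1_{Z ≤ c}` tends to zero, then the time average of `g(√Z)²` tends to `σ²`. -/
theorem time_average_g_sq (g : ℝ → ℝ) (σ K₁ K₂ : ℝ) (Z : ℝ → ℝ)
    (hgc : Continuous g) (hσ : 0 < σ ^ 2)
    (hlim : Tendsto (fun x => (g x) ^ 2) (Filter.cocompact ℝ) (nhds (σ ^ 2)))
    (hK₁ : 0 < K₁) (hbd : ∀ x, K₁ ^ 2 ≤ (g x) ^ 2 ∧ (g x) ^ 2 ≤ K₂ ^ 2)
    (hZmeas : Measurable Z) (hZpos : ∀ s, 0 ≤ Z s)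
    (h : ∀ c : ℝ, 0 < c → Tendsto (fun t : ℝ =>
        (∫ s in Ioc (0:ℝ) t, if Z s ≤ c then (1:ℝ) else 0) / t) atTop (nhds 0)) :
    Tendsto (fun t : ℝ =>
        (∫ s in Ioc (0:ℝ) t, (g (Real.sqrt (Z s))) ^ 2) / t) atTop (nhds (σ ^ 2)) :=
  time_average_g_sq_general g σ Z hgc hlim hZmeas h
end

section
/- Let Z̃ : [0,∞) → [0,∞) be measurable, let θ : [0,∞) → [0,∞) be absolutely continuous and strictly increasing with θ(0) = 0 and derivative θ'(t) = g(√(Z̃(θ(t))))² a.e., where K₁² ≤ g² ≤ K₂² with K₁ > 0. If for some c > 0, lim_{t→∞} (1/t)·∫₀ᵗ 1_{Z̃(u) ≤ c} du = 0, then lim_{t→∞} (1/t)·∫₁ᵗ 1_{Z̃(θ(s)) ≤ c} ds = 0. -/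
open Filter MeasureTheory Set

/-!
Substituting `u = θ s`, the set of `s ∈ (1, t]` with `Z̃ (θ s) ≤ c` is mapped injectively into
`{u ∈ (0, θ t] | Z̃ u ≤ c}`, and lengths are stretched by `θ' = g² ≥ K₁²`. Since
`K₁² t ≤ θ t ≤ K₂² t`, the average over `(1, t]` is at most `K₂² / K₁²` times the average of
`1_{Z̃ ≤ c}` over `(0, θ t]`, which tends to zero because `θ t → ∞`.
-/

theorem mul_le_sub_of_eq_setIntegral {φ h : ℝ → ℝ} {a b m : ℝ} (hab : a ≤ b)
    (hφ : φ b - φ a = ∫ t in Ioc a b, h t) (hint : IntegrableOn h (Ioc a b))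
    (hm : ∀ t ∈ Ioc a b, m ≤ h t) : m * (b - a) ≤ φ b - φ a := by
  simpa [hφ, Real.volume_real_Ioc_of_le hab] using
    setIntegral_ge_of_const_le_real measurableSet_Ioc measure_Ioc_lt_top.ne hm hint

theorem sub_le_mul_of_eq_setIntegral {φ h : ℝ → ℝ} {a b M : ℝ} (hab : a ≤ b)
    (hφ : φ b - φ a = ∫ t in Ioc a b, h t) (hM : ∀ t ∈ Ioc a b, |h t| ≤ M) :
    φ b - φ a ≤ M * (b - a) := by
  have := norm_setIntegral_le_of_norm_le_const (μ := volume) measure_Ioc_lt_top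
    fun t ht => (Real.norm_eq_abs (h t)).trans_le (hM t ht)
  rw [Real.volume_real_Ioc_of_le hab, ← hφ] at this
  exact (le_abs_self _).trans this

theorem integrableOn_Ioc_comp_of_monotoneOn {θ F : ℝ → ℝ} {a b M : ℝ}
    (hθ : MonotoneOn θ (Ioc a b)) (hF : Measurable F) (hM : ∀ x, |F x| ≤ M) :
    IntegrableOn (fun t => F (θ t)) (Ioc a b) := by
  have hθm : AEMeasurable θ (volume.restrict (Ioc a b)) :=
    aemeasurable_restrict_of_monotoneOn measurableSet_Ioc hθ
  exact Integrable.of_bound (hF.comp_aemeasurable hθm).aestronglyMeasurable M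
    (ae_of_all _ fun t => hM (θ t))

theorem mul_setIntegral_comp_le_of_le_abs_deriv {f φ φ' : ℝ → ℝ} {s T : Set ℝ} {m : ℝ}
    (hs : MeasurableSet s) (hφ' : ∀ x ∈ s, HasDerivWithinAt φ (φ' x) s x) (hinj : InjOn φ s)
    (hm0 : 0 ≤ m) (hm : ∀ x ∈ s, m ≤ |φ' x|) (hf : 0 ≤ f) (hfT : IntegrableOn f T)
    (hsub : φ '' s ⊆ T) : m * ∫ x in s, f (φ x) ≤ ∫ u in T, f u := by
  have hint : IntegrableOn (fun x => |φ' x| • f (φ x)) s :=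
    (integrableOn_image_iff_integrableOn_abs_deriv_smul hs hφ' hinj f).1 (hfT.mono_set hsub)
  calc m * ∫ x in s, f (φ x)
      = ∫ x in s, m * f (φ x) := (integral_const_mul m _).symm
    _ ≤ ∫ x in s, |φ' x| • f (φ x) :=
        integral_mono_of_nonneg (ae_of_all _ fun x => mul_nonneg hm0 (hf _)) hint
          ((ae_restrict_iff' hs).2 (ae_of_all _ fun x hx =>
            mul_le_mul_of_nonneg_right (hm x hx) (hf _)))
    _ = ∫ u in φ '' s, f u := (integral_image_eq_integral_abs_deriv_smul hs hφ' hinj f).symm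
    _ ≤ ∫ u in T, f u := setIntegral_mono_set hfT (ae_of_all _ (hf ·)) hsub.eventuallyLE

theorem mul_setIntegral_comp_le_of_ae_hasDerivAt {f φ φ' : ℝ → ℝ} {s T : Set ℝ} {m : ℝ}
    (hs : MeasurableSet s) (hφ' : ∀ᵐ x, x ∈ s → HasDerivAt φ (φ' x) x) (hinj : InjOn φ s)
    (hm0 : 0 ≤ m) (hm : ∀ x ∈ s, m ≤ |φ' x|) (hf : 0 ≤ f) (hfT : IntegrableOn f T)
    (hsub : φ '' s ⊆ T) : m * ∫ x in s, f (φ x) ≤ ∫ u in T, f u := by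
  set N := toMeasurable volume {x | ¬(x ∈ s → HasDerivAt φ (φ' x) x)}
  have hN : volume N = 0 := by rwa [measure_toMeasurable, ← ae_iff]
  have hderiv : ∀ x ∈ s \ N, HasDerivWithinAt φ (φ' x) (s \ N) x := fun x hx =>
    (not_not.1 fun h => hx.2 (subset_toMeasurable _ _ h) : _) hx.1 |>.hasDerivWithinAt
  rw [← setIntegral_congr_set (sdiff_null_ae_eq_self hN)]
  exact mul_setIntegral_comp_le_of_le_abs_deriv (hs.diff (measurableSet_toMeasurable _ _))
    hderiv (hinj.mono sdiff_subset) hm0 (fun x hx => hm x hx.1) hf hfT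
    ((image_mono sdiff_subset).trans hsub)

theorem tendsto_div_of_mul_le_comp {A B φ : ℝ → ℝ} {k K : ℝ} (hk : 0 < k)
    (hφ : Tendsto φ atTop atTop) (hB : Tendsto (fun x => B x / x) atTop (nhds 0))
    (hA0 : ∀ᶠ t in atTop, 0 ≤ A t) (hAB : ∀ᶠ t in atTop, k * A t ≤ B (φ t))
    (hB0 : ∀ᶠ x in atTop, 0 ≤ B x) (hφK : ∀ᶠ t in atTop, φ t ≤ K * t) :
    Tendsto (fun t => A t / t) atTop (nhds 0) := by
  have hlim := (hB.comp hφ).const_mul (K / k)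
  rw [mul_zero] at hlim
  refine squeeze_zero' ?_ ?_ hlim
  · filter_upwards [hA0, eventually_gt_atTop 0] with t hAt ht using div_nonneg hAt ht.le
  filter_upwards [hAB, hφK, hφ.eventually hB0, hφ.eventually_gt_atTop 0, eventually_gt_atTop 0]
    with t hABt hφKt hBt hφt ht
  simp only [Function.comp_apply]
  rw [div_le_iff₀ ht, div_mul_div_comm, div_mul_eq_mul_div, le_div_iff₀ (by positivity)]
  nlinarith [mul_le_mul_of_nonneg_left hφKt hBt, mul_le_mul_of_nonneg_right hABt hφt.le]

theorem time_change_indicator_average_general (g : ℝ → ℝ) (K₁ K₂ : ℝ) (Ztil θ : ℝ → ℝ)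
    (c : ℝ)
    (hgm : Measurable g) (hK₁ : 0 < K₁)
    (hbd : ∀ x, K₁ ^ 2 ≤ (g x) ^ 2 ∧ (g x) ^ 2 ≤ K₂ ^ 2)
    (hZmeas : Measurable Ztil)
    (hθm : StrictMonoOn θ (Ici 0)) (hθ0 : θ 0 = 0)
    (hθac : ∀ a b : ℝ, 0 ≤ a → a ≤ b →
      θ b - θ a = ∫ t in Ioc a b, (g (Real.sqrt (Ztil (θ t)))) ^ 2)
    (hθder : ∀ᵐ t : ℝ, 0 ≤ t →
      HasDerivAt θ ((g (Real.sqrt (Ztil (θ t)))) ^ 2) t)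
    (h : Tendsto (fun t : ℝ =>
        (∫ u in Ioc (0:ℝ) t, if Ztil u ≤ c then (1:ℝ) else 0) / t) atTop (nhds 0)) :
    Tendsto (fun t : ℝ =>
        (∫ s in Ioc (1:ℝ) t, if Ztil (θ s) ≤ c then (1:ℝ) else 0) / t)
      atTop (nhds 0) := by
  set G : ℝ → ℝ := fun u => if Ztil u ≤ c then 1 else 0
  have hG0 : 0 ≤ G := fun u => by dsimp only [G]; split_ifs <;> norm_num
  have hGint : ∀ b, IntegrableOn G (Ioc 0 b) := fun b =>
    integrableOn_Ioc_comp_of_monotoneOn (M := 1) monotoneOn_id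
      (Measurable.ite (measurableSet_le hZmeas measurable_const) measurable_const
        measurable_const)
      fun u => by split_ifs <;> norm_num
  have habs : ∀ x, |g x ^ 2| = g x ^ 2 := fun x => abs_of_nonneg (sq_nonneg _)
  have hθ_int : ∀ b, IntegrableOn (fun t => g (Real.sqrt (Ztil (θ t))) ^ 2) (Ioc 0 b) := fun b =>
    integrableOn_Ioc_comp_of_monotoneOn (hθm.monotoneOn.mono fun _ hx => hx.1.le)
      ((hgm.comp (Real.continuous_sqrt.measurable.comp hZmeas)).pow_const 2)
      fun x => (habs _).trans_le (hbd _).2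
  have hθ_lower : ∀ t ≥ 0, K₁ ^ 2 * t ≤ θ t := fun t ht => by
    simpa [hθ0] using mul_le_sub_of_eq_setIntegral ht (hθac 0 t le_rfl ht) (hθ_int t)
      fun x _ => (hbd _).1
  have hθ_upper : ∀ t ≥ 0, θ t ≤ K₂ ^ 2 * t := fun t ht => by
    simpa [hθ0] using sub_le_mul_of_eq_setIntegral ht (hθac 0 t le_rfl ht)
      fun x _ => (habs _).trans_le (hbd _).2
  have hkey : ∀ t ≥ 1, K₁ ^ 2 * ∫ s in Ioc 1 t, G (θ s) ≤ ∫ u in Ioc 0 (θ t), G u :=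
    fun t ht => mul_setIntegral_comp_le_of_ae_hasDerivAt measurableSet_Ioc
      (hθder.mono fun x hx hxs => hx (zero_le_one.trans hxs.1.le))
      (hθm.injOn.mono fun x hx => zero_le_one.trans hx.1.le) (sq_nonneg _)
      (fun x _ => (hbd _).1.trans_eq (habs _).symm) hG0 (hGint _)
      (hθ0 ▸ (image_mono (Ioc_subset_Ioc_left zero_le_one)).trans
        (hθm.mono Icc_subset_Ici_self).image_Ioc_subset)
  have hθ_top : Tendsto θ atTop atTop :=
    tendsto_atTop_mono' _ ((eventually_ge_atTop 0).mono hθ_lower)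
      (tendsto_id.const_mul_atTop (pow_pos hK₁ 2))
  exact tendsto_div_of_mul_le_comp (pow_pos hK₁ 2) hθ_top h
    (Eventually.of_forall fun t => integral_nonneg fun s => hG0 (θ s))
    ((eventually_ge_atTop 1).mono hkey)
    (Eventually.of_forall fun x => setIntegral_nonneg measurableSet_Ioc fun u _ => hG0 u)
    ((eventually_ge_atTop 0).mono hθ_upper)

/-- If `θ` is strictly increasing with `θ 0 = 0` and a.e. derivative
`θ'(t) = g(√(Z̃(θ t)))²` where `0 < K₁² ≤ g² ≤ K₂²`, and the time average of
`1_{Z̃ ≤ c}` tends to zero, then so does the time average of `1_{Z̃(θ(·)) ≤ c}`. -/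
theorem time_change_indicator_average (g : ℝ → ℝ) (K₁ K₂ : ℝ) (Ztil θ : ℝ → ℝ)
    (c : ℝ) (hc : 0 < c)
    (hgm : Measurable g) (hK₁ : 0 < K₁)
    (hbd : ∀ x, K₁ ^ 2 ≤ (g x) ^ 2 ∧ (g x) ^ 2 ≤ K₂ ^ 2)
    (hZmeas : Measurable Ztil) (hZpos : ∀ u, 0 ≤ Ztil u)
    (hθm : StrictMonoOn θ (Ici 0)) (hθ0 : θ 0 = 0)
    (hθac : ∀ a b : ℝ, 0 ≤ a → a ≤ b →
      θ b - θ a = ∫ t in Ioc a b, (g (Real.sqrt (Ztil (θ t)))) ^ 2)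
    (hθder : ∀ᵐ t : ℝ, 0 ≤ t →
      HasDerivAt θ ((g (Real.sqrt (Ztil (θ t)))) ^ 2) t)
    (h : Tendsto (fun t : ℝ =>
        (∫ u in Ioc (0:ℝ) t, if Ztil u ≤ c then (1:ℝ) else 0) / t) atTop (nhds 0)) :
    Tendsto (fun t : ℝ =>
        (∫ s in Ioc (1:ℝ) t, if Ztil (θ s) ≤ c then (1:ℝ) else 0) / t)
      atTop (nhds 0) :=
  time_change_indicator_average_general g K₁ K₂ Ztil θ c hgm hK₁ hbd hZmeas hθm hθ0 hθac hθder h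
end

section
/- Let δ > 0 and x₀ ≠ 0, and let Z̃ be the squared Bessel process of dimension δ started at x₀², i.e. the solution of dZ̃(t) = δ dt + 2√(Z̃(t)) dW̃(t), Z̃(0) = x₀². Then for every c > 0 there exist constants C > 0 and t₀ > 0 such that P[Z̃(t) ≤ c] ≤ C·t^{-δ/2} for all t ≥ t₀; in particular ∫₁^∞ P[Z̃(e^s − 1) ≤ c] ds < ∞. -/
open Filter Real Set MeasureTheory

/-! For `t ≥ 1` and `y ≤ c` the argument `z = |x₀| √y / t` of `I_ν` (`ν = δ/2 - 1`) stays in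
`[0, |x₀| √c]`, on which the power series `I_ν(z) / (z/2)^ν` is bounded by its value at
`|x₀| √c`. The factor `(z/2)^ν` cancels the `x₀`-dependence of the prefactor, leaving
`q_t(x₀², y) ≤ K t^{-δ/2} y^{δ/2-1}`, which is integrable on `(0, c]` because `δ > 0`.
With `t = e^s - 1` the bound decays like `e^{-δ s/2}`. -/

/-- The modified Bessel function of the first kind of index `ν`, defined by its
power series. -/
noncomputable def besselI (ν : ℝ) (x : ℝ) : ℝ :=
  (x / 2) ^ ν * ∑' n : ℕ, (x / 2) ^ (2 * n) / (n.factorial * Real.Gamma (ν + n + 1))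

lemma Real.one_le_Gamma_of_two_le {s : ℝ} (hs : 2 ≤ s) : 1 ≤ Gamma s :=
  Gamma_two ▸ Gamma_strictMonoOn_Ici.monotoneOn (mem_Ici.2 le_rfl) hs hs

noncomputable def besselTerm (ν x : ℝ) (n : ℕ) : ℝ :=
  (x / 2) ^ (2 * n) / (n.factorial * Gamma (ν + n + 1))

section BesselSeries

variable {ν : ℝ}

lemma Real.Gamma_add_nat_add_one_pos (hν : 0 < ν + 1) (n : ℕ) : 0 < Gamma (ν + n + 1) :=
  Gamma_pos_of_pos (by linarith [(Nat.cast_nonneg n : (0 : ℝ) ≤ n)])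

lemma besselTerm_nonneg (hν : 0 < ν + 1) (x : ℝ) (n : ℕ) : 0 ≤ besselTerm ν x n := by
  have := Gamma_add_nat_add_one_pos hν n
  exact div_nonneg (Even.pow_nonneg (even_two_mul n) _) (by positivity)

lemma besselTerm_le_pow_div_factorial (hν : 0 < ν + 1) (x : ℝ) {n : ℕ} (hn : 2 ≤ n) :
    besselTerm ν x n ≤ ((x / 2) ^ 2) ^ n / n.factorial := by
  have hn' : (2 : ℝ) ≤ n := by exact_mod_cast hn
  have hΓ : 1 ≤ Gamma (ν + n + 1) := one_le_Gamma_of_two_le (by linarith)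
  rw [besselTerm, ← pow_mul, div_mul_eq_div_div]
  exact div_le_self (div_nonneg (Even.pow_nonneg (even_two_mul n) _) (by positivity)) hΓ

lemma summable_besselTerm (hν : 0 < ν + 1) (x : ℝ) : Summable (besselTerm ν x) :=
  (summable_pow_div_factorial ((x / 2) ^ 2)).of_norm_bounded_eventually_nat <| by
    filter_upwards [eventually_ge_atTop 2] with n hn
    rw [norm_of_nonneg (besselTerm_nonneg hν x n)]
    exact besselTerm_le_pow_div_factorial hν x hn

lemma besselTerm_le_besselTerm (hν : 0 < ν + 1) {x X : ℝ} (hx : 0 ≤ x) (hxX : x ≤ X) (n : ℕ) :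
    besselTerm ν x n ≤ besselTerm ν X n := by
  have := Gamma_add_nat_add_one_pos hν n
  unfold besselTerm
  gcongr

lemma tsum_besselTerm_le_tsum_besselTerm (hν : 0 < ν + 1) {x X : ℝ} (hx : 0 ≤ x)
    (hxX : x ≤ X) : ∑' n, besselTerm ν x n ≤ ∑' n, besselTerm ν X n :=
  (summable_besselTerm hν x).tsum_le_tsum (besselTerm_le_besselTerm hν hx hxX)
    (summable_besselTerm hν X)

lemma besselI_nonneg (hν : 0 < ν + 1) {x : ℝ} (hx : 0 ≤ x) : 0 ≤ besselI ν x :=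
  mul_nonneg (rpow_nonneg (by linarith) _) (tsum_nonneg (besselTerm_nonneg hν x))

lemma besselI_le_rpow_mul_tsum (hν : 0 < ν + 1) {x X : ℝ} (hx : 0 ≤ x) (hxX : x ≤ X) :
    besselI ν x ≤ (x / 2) ^ ν * ∑' n, besselTerm ν X n :=
  mul_le_mul_of_nonneg_left (tsum_besselTerm_le_tsum_besselTerm hν hx hxX)
    (rpow_nonneg (by linarith) _)

lemma measurable_besselI (hν : 0 < ν + 1) : Measurable (besselI ν) := by
  refine Measurable.mul (by fun_prop) <| measurable_of_tendsto_metrizable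
    (f := fun N x => ∑ n ∈ Finset.range N, besselTerm ν x n)
    (fun N => Finset.measurable_sum _ fun n _ => by unfold besselTerm; fun_prop) ?_
  exact tendsto_pi_nhds.2 fun x => (summable_besselTerm hν x).hasSum.tendsto_sum_nat

end BesselSeries

noncomputable def besselDensity (δ x₀ t y : ℝ) : ℝ :=
  1 / (2 * t) * (y / x₀ ^ 2) ^ ((δ / 2 - 1) / 2) * exp (-(x₀ ^ 2 + y) / (2 * t)) *
    besselI (δ / 2 - 1) (|x₀| * √y / t)

section BesselDensity

variable {δ x₀ : ℝ}

lemma measurable_besselDensity (hδ : 0 < δ) (x₀ : ℝ) :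
    Measurable (Function.uncurry (besselDensity δ x₀)) :=
  Measurable.mul (by fun_prop) ((measurable_besselI (by linarith)).comp (by fun_prop))

lemma besselDensity_nonneg (hδ : 0 < δ) (x₀ : ℝ) {t y : ℝ} (ht : 0 < t) (hy : 0 < y) :
    0 ≤ besselDensity δ x₀ t y := by
  have := besselI_nonneg (ν := δ / 2 - 1) (by linarith) (x := |x₀| * √y / t) (by positivity)
  unfold besselDensity
  positivity

lemma besselDensity_prefactor_eq (δ : ℝ) (hx₀ : x₀ ≠ 0) {t y : ℝ} (ht : 0 < t) (hy : 0 < y) :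
    1 / (2 * t) * (y / x₀ ^ 2) ^ ((δ / 2 - 1) / 2) * (|x₀| * √y / t / 2) ^ (δ / 2 - 1)
      = (2 * t) ^ (-(δ / 2)) * y ^ (δ / 2 - 1) := by
  have hx : 0 < |x₀| := abs_pos.2 hx₀
  have h2t : 0 < 2 * t := by linarith
  rw [one_div, ← exp_log h2t, ← exp_neg, rpow_def_of_pos (by positivity),
    rpow_def_of_pos (by positivity), rpow_def_of_pos hy, rpow_def_of_pos (exp_pos _), log_exp,
    ← exp_add, ← exp_add, ← exp_add]
  congr 1
  rw [log_div hy.ne' (by positivity), log_div (by positivity) two_ne_zero,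
    log_div (by positivity) ht.ne', log_mul hx.ne' (sqrt_pos.2 hy).ne',
    log_mul two_ne_zero ht.ne', log_sqrt hy.le, log_pow, log_abs]
  push_cast
  ring

lemma besselDensity_le (hδ : 0 < δ) (hx₀ : x₀ ≠ 0) {c t y : ℝ} (ht : 1 ≤ t) (hy : 0 < y)
    (hyc : y ≤ c) :
    besselDensity δ x₀ t y ≤
      (∑' n, besselTerm (δ / 2 - 1) (|x₀| * √c) n) * (2 * t) ^ (-(δ / 2)) * y ^ (δ / 2 - 1) := by
  have hν : 0 < δ / 2 - 1 + 1 := by linarith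
  have ht0 : 0 < t := by linarith
  set z := |x₀| * √y / t
  have hz : 0 ≤ z := by positivity
  have hzc : z ≤ |x₀| * √c :=
    calc z ≤ |x₀| * √y := div_le_self (by positivity) ht
      _ ≤ |x₀| * √c := by gcongr
  have hexp : exp (-(x₀ ^ 2 + y) / (2 * t)) ≤ 1 :=
    exp_le_one_iff.2 (div_nonpos_of_nonpos_of_nonneg (by nlinarith [sq_nonneg x₀]) (by linarith))
  calc besselDensity δ x₀ t y
      ≤ 1 / (2 * t) * (y / x₀ ^ 2) ^ ((δ / 2 - 1) / 2) * 1 *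
          ((z / 2) ^ (δ / 2 - 1) * ∑' n, besselTerm (δ / 2 - 1) (|x₀| * √c) n) := by
        unfold besselDensity
        gcongr
        · exact besselI_nonneg hν hz
        · exact besselI_le_rpow_mul_tsum hν hz hzc
    _ = _ := by
        linear_combination (∑' n, besselTerm (δ / 2 - 1) (|x₀| * √c) n) *
          besselDensity_prefactor_eq δ hx₀ ht0 hy

lemma exists_integral_besselDensity_le (hδ : 0 < δ) (hx₀ : x₀ ≠ 0) {c : ℝ} (hc : 0 ≤ c) :
    ∃ C, 0 < C ∧ ∀ t, 1 ≤ t → ∫ y in Ioc 0 c, besselDensity δ x₀ t y ≤ C * t ^ (-(δ / 2)) := by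
  set S := ∑' n, besselTerm (δ / 2 - 1) (|x₀| * √c) n
  set K := S * 2 ^ (-(δ / 2)) * (c ^ (δ / 2) / (δ / 2))
  have hpow : ∫ y in Ioc 0 c, y ^ (δ / 2 - 1) = c ^ (δ / 2) / (δ / 2) := by
    rw [← intervalIntegral.integral_of_le hc, integral_rpow (Or.inl (by linarith)),
      sub_add_cancel, zero_rpow (by positivity), sub_zero]
  have hint : IntegrableOn (fun y : ℝ => y ^ (δ / 2 - 1)) (Ioc 0 c) :=
    (intervalIntegral.intervalIntegrable_rpow' (by linarith)).1
  refine ⟨max K 1, by positivity, fun t ht => ?_⟩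
  have ht0 : 0 < t := by linarith
  calc ∫ y in Ioc 0 c, besselDensity δ x₀ t y
      ≤ ∫ y in Ioc 0 c, S * (2 * t) ^ (-(δ / 2)) * y ^ (δ / 2 - 1) :=
        integral_mono_of_nonneg
          (ae_restrict_of_forall_mem measurableSet_Ioc fun y hy =>
            besselDensity_nonneg hδ x₀ ht0 hy.1)
          (hint.const_mul _)
          (ae_restrict_of_forall_mem measurableSet_Ioc fun y hy =>
            besselDensity_le hδ hx₀ ht hy.1 hy.2)
    _ = K * t ^ (-(δ / 2)) := by
        rw [integral_const_mul, hpow, mul_rpow two_pos.le ht0.le]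
        ring
    _ ≤ max K 1 * t ^ (-(δ / 2)) := by gcongr; exact le_max_left _ _

end BesselDensity

lemma integrableOn_exp_sub_one_rpow_neg {a : ℝ} (ha : 0 < a) :
    IntegrableOn (fun s => (exp s - 1) ^ (-a)) (Ici 1) := by
  refine (((integrableOn_Ici_iff_integrableOn_Ioi).2 (exp_neg_integrableOn_Ioi 1 ha)).const_mul
    (2 ^ a)).mono' (by fun_prop : Measurable fun s => (exp s - 1) ^ (-a)).aestronglyMeasurable
    (ae_restrict_of_forall_mem measurableSet_Ici fun s hs => ?_)
  have h2 : 2 ≤ exp s := by linarith [add_one_le_exp s, mem_Ici.1 hs]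
  rw [norm_of_nonneg (rpow_nonneg (by linarith) _)]
  calc (exp s - 1) ^ (-a) ≤ (exp s / 2) ^ (-a) :=
        rpow_le_rpow_of_nonpos (by positivity) (by linarith) (by linarith)
    _ = 2 ^ a * exp (-a * s) := by
        rw [div_rpow (exp_pos s).le two_pos.le, ← exp_mul, rpow_neg two_pos.le, div_inv_eq_mul,
          mul_comm, mul_comm s]

theorem squared_bessel_tail_bound_general
    {Ω : Type*} [MeasurableSpace Ω] (μ : Measure Ω)
    (δ x₀ : ℝ) (hδ : 0 < δ) (hx₀ : x₀ ≠ 0)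
    (Ztil : ℝ → Ω → ℝ)
    (hdensity : ∀ t : ℝ, 0 < t → ∀ c : ℝ, 0 ≤ c →
      (μ {ω | Ztil t ω ≤ c}).toReal =
        ∫ y in Ioc (0:ℝ) c,
          (1 / (2 * t)) * (y / x₀ ^ 2) ^ ((δ / 2 - 1) / 2) *
            Real.exp (-(x₀ ^ 2 + y) / (2 * t)) *
              besselI (δ / 2 - 1) (|x₀| * Real.sqrt y / t)) :
    ∀ c : ℝ, 0 < c →
      (∃ C t₀ : ℝ, 0 < C ∧ 0 < t₀ ∧
          ∀ t : ℝ, t₀ ≤ t → (μ {ω | Ztil t ω ≤ c}).toReal ≤ C * t ^ (-(δ / 2))) ∧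
        IntegrableOn (fun s : ℝ => (μ {ω | Ztil (Real.exp s - 1) ω ≤ c}).toReal)
          (Ici (1:ℝ)) := by
  intro c hc
  obtain ⟨C, hC, hbound⟩ := exists_integral_besselDensity_le hδ hx₀ hc.le
  have htail : ∀ t, 1 ≤ t → (μ {ω | Ztil t ω ≤ c}).toReal ≤ C * t ^ (-(δ / 2)) :=
    fun t ht => (hdensity t (by linarith) c hc.le).trans_le (hbound t ht)
  refine ⟨⟨C, 1, hC, one_pos, htail⟩, ?_⟩
  have hexp : ∀ s ∈ Ici (1 : ℝ), 1 ≤ exp s - 1 := fun s hs => by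
    linarith [add_one_le_exp s, mem_Ici.1 hs]
  have hmeas : StronglyMeasurable fun s => ∫ y in Ioc 0 c, besselDensity δ x₀ (exp s - 1) y :=
    ((measurable_besselDensity hδ x₀).comp (by fun_prop :
      Measurable fun p : ℝ × ℝ => (exp p.1 - 1, p.2))).stronglyMeasurable.integral_prod_right'
  refine ((integrableOn_exp_sub_one_rpow_neg (half_pos hδ)).const_mul C).mono'
    (hmeas.aestronglyMeasurable.congr (ae_restrict_of_forall_mem measurableSet_Ici
      fun s hs => (hdensity _ (by linarith [hexp s hs]) c hc.le).symm))
    (ae_restrict_of_forall_mem measurableSet_Ici fun s hs => ?_)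
  rw [norm_of_nonneg ENNReal.toReal_nonneg]
  exact htail _ (hexp s hs)

/-- If `Z̃` is the squared Bessel process of dimension `δ > 0` started at `x₀² > 0`
(characterised here by its transition density `q_t(x₀²,·)`), then for every `c > 0` we
have `P[Z̃(t) ≤ c] ≤ C t^{-δ/2}` for large `t`, and `∫₁^∞ P[Z̃(e^s - 1) ≤ c] ds < ∞`. -/
theorem squared_bessel_tail_bound
    {Ω : Type*} [MeasurableSpace Ω] (μ : Measure Ω) [IsProbabilityMeasure μ]
    (δ x₀ : ℝ) (hδ : 0 < δ) (hx₀ : x₀ ≠ 0)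
    (Ztil : ℝ → Ω → ℝ) (hZmeas : ∀ t, Measurable (Ztil t))
    (hZpos : ∀ t ω, 0 ≤ Ztil t ω)
    (hdensity : ∀ t : ℝ, 0 < t → ∀ c : ℝ, 0 ≤ c →
      (μ {ω | Ztil t ω ≤ c}).toReal =
        ∫ y in Ioc (0:ℝ) c,
          (1 / (2 * t)) * (y / x₀ ^ 2) ^ ((δ / 2 - 1) / 2) *
            Real.exp (-(x₀ ^ 2 + y) / (2 * t)) *
              besselI (δ / 2 - 1) (|x₀| * Real.sqrt y / t)) :
    ∀ c : ℝ, 0 < c →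
      (∃ C t₀ : ℝ, 0 < C ∧ 0 < t₀ ∧
          ∀ t : ℝ, t₀ ≤ t → (μ {ω | Ztil t ω ≤ c}).toReal ≤ C * t ^ (-(δ / 2))) ∧
        IntegrableOn (fun s : ℝ => (μ {ω | Ztil (Real.exp s - 1) ω ≤ c}).toReal)
          (Ici (1:ℝ)) :=
  squared_bessel_tail_bound_general μ δ x₀ hδ hx₀ Ztil hdensity
end

section
/- Let (F_c(t))_{t ≥ 1} be a family of nonnegative random variables of the form F_c(t) = e^{-t}∫₁ᵗ e^s·1_{A(s)} ds where s ↦ 1_{A(s)}(ω) is measurable and {A(s)} are events with s ↦ P[A(s)] continuous and integrable on [1,∞). Then F_c(t) → 0 almost surely as t → ∞. -/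
/-!
By Tonelli, `∫ P[A s] ds < ∞` says that `ω ↦ Leb {s ≥ 1 | ω ∈ A s}` has finite expectation, so
for almost every `ω` the path `s ↦ 1_{A s}(ω)` is integrable on `[1, ∞)`. For an integrable `f`,
`e^{-t} ∫₁ᵗ e^s f(s) ds = ∫ 1_{s ≤ t} e^{s-t} f(s) ds` tends to `0` by dominated convergence,
with `|f|` as dominating function.
-/

open Filter Real Set MeasureTheory

theorem tendsto_exp_neg_mul_setIntegral_Ioc_exp_mul {f : ℝ → ℝ} {a : ℝ}
    (hf : IntegrableOn f (Ioi a)) :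
    Tendsto (fun t => exp (-t) * ∫ s in Ioc a t, exp s * f s) atTop (nhds 0) := by
  have hrepr : ∀ t, exp (-t) * ∫ s in Ioc a t, exp s * f s
      = ∫ s in Ioi a, (Iic t).indicator (fun s => exp (s - t) * f s) s := by
    intro t
    rw [setIntegral_indicator measurableSet_Iic, Ioi_inter_Iic, ← integral_const_mul]
    simp only [sub_eq_neg_add, exp_add, mul_assoc]
  simp only [hrepr]
  rw [← integral_zero ℝ ℝ]
  refine tendsto_integral_filter_of_dominated_convergence (fun s => ‖f s‖)
    (Eventually.of_forall fun t => ?_) (Eventually.of_forall fun t => ?_) hf.norm ?_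
  · exact ((continuous_exp.comp (continuous_sub_right t)).aestronglyMeasurable.mul
      hf.aestronglyMeasurable).indicator measurableSet_Iic
  · refine Eventually.of_forall fun s => ?_
    by_cases hst : s ∈ Iic t
    · rw [indicator_of_mem hst, norm_mul, norm_of_nonneg (exp_pos _).le]
      exact mul_le_of_le_one_left (norm_nonneg _) (exp_le_one_iff.2 (sub_nonpos.2 hst))
    · rw [indicator_of_notMem hst, norm_zero]
      exact norm_nonneg _
  · refine Eventually.of_forall fun s => ?_
    have hdecay : Tendsto (fun t => exp (s - t) * f s) atTop (nhds 0) := by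
      simpa only [sub_eq_add_neg, exp_add, zero_mul, mul_zero] using
        (tendsto_exp_neg_atTop_nhds_zero.const_mul (exp s)).mul_const (f s)
    refine hdecay.congr' ?_
    filter_upwards [eventually_ge_atTop s] with t hst
    exact (indicator_of_mem (mem_Iic.2 hst) (fun s => exp (s - t) * f s)).symm

theorem ae_measure_setOf_mem_lt_top_of_integrable {α Ω : Type*}
    [MeasurableSpace α] [MeasurableSpace Ω]
    {ν : Measure α} [SFinite ν] {μ : Measure Ω} [IsFiniteMeasure μ] {A : α → Set Ω}
    (hA : MeasurableSet {p : α × Ω | p.2 ∈ A p.1})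
    (hint : Integrable (fun s => (μ (A s)).toReal) ν) :
    ∀ᵐ ω ∂μ, ν {s | ω ∈ A s} < ⊤ := by
  refine ae_lt_top (measurable_measure_prodMk_right hA) ?_
  change ∫⁻ ω, ν ((fun s => (s, ω)) ⁻¹' {p : α × Ω | p.2 ∈ A p.1}) ∂μ ≠ ⊤
  rw [← Measure.prod_apply_symm hA, Measure.prod_apply hA]
  refine (lt_of_eq_of_lt (lintegral_congr fun s => ?_) hint.lintegral_lt_top).ne
  exact (ENNReal.ofReal_toReal (measure_ne_top μ _)).symm

theorem exp_weighted_indicator_average_tendsto_zero_general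
    {Ω : Type*} [MeasurableSpace Ω] (μ : Measure Ω) [IsProbabilityMeasure μ]
    (A : ℝ → Set Ω)
    (hAmeas : MeasurableSet {p : ℝ × Ω | p.2 ∈ A p.1})
    (hAint : IntegrableOn (fun s : ℝ => (μ (A s)).toReal) (Ici 1)) :
    ∀ᵐ ω ∂μ, Tendsto (fun t : ℝ => Real.exp (-t) *
        ∫ s in Ioc (1:ℝ) t, Real.exp s * (A s).indicator (fun _ => (1:ℝ)) ω)
      atTop (nhds 0) := by
  filter_upwards [ae_measure_setOf_mem_lt_top_of_integrable hAmeas hAint] with ω hω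
  refine tendsto_exp_neg_mul_setIntegral_Ioc_exp_mul ?_
  have hpath : IntegrableOn (fun _ => (1 : ℝ)) {s | ω ∈ A s} (volume.restrict (Ici 1)) :=
    integrableOn_const hω.ne
  -- `(A s).indicator 1 ω` and `{s | ω ∈ A s}.indicator 1 s` agree definitionally.
  exact ((integrable_indicator_iff (measurable_prodMk_right hAmeas)).2 hpath).mono_measure
    (Measure.restrict_mono Ioi_subset_Ici_self le_rfl)

/-- If `{A(s)}` is a jointly measurable family of events with `s ↦ P[A(s)]` continuous
and integrable on `[1,∞)`, then `F_c(t) = e^{-t} ∫₁ᵗ e^s 1_{A(s)} ds → 0` a.s. -/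
theorem exp_weighted_indicator_average_tendsto_zero
    {Ω : Type*} [MeasurableSpace Ω] (μ : Measure Ω) [IsProbabilityMeasure μ]
    (A : ℝ → Set Ω)
    (hAmeas : MeasurableSet {p : ℝ × Ω | p.2 ∈ A p.1})
    (hAcont : ContinuousOn (fun s : ℝ => (μ (A s)).toReal) (Ici 1))
    (hAint : IntegrableOn (fun s : ℝ => (μ (A s)).toReal) (Ici 1)) :
    ∀ᵐ ω ∂μ, Tendsto (fun t : ℝ => Real.exp (-t) *
        ∫ s in Ioc (1:ℝ) t, Real.exp s * (A s).indicator (fun _ => (1:ℝ)) ω)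
      atTop (nhds 0) :=
  exp_weighted_indicator_average_tendsto_zero_general μ A hAmeas hAint
end
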